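/- (Pappus' theorem, bracket form.) Let A, B, C, D, E, F, G, H, I be vectors in ℝ³ regarded as homogeneous coordinates of points of the real projective plane, and let T denote the family of nine index triples {A,B,C}, {D,E,F}, {A,E,G}, {B,D,G}, {A,F,H}, {C,D,H}, {B,F,I}, {C,E,I}, {G,H,I}. Assume that every triple of distinct points among the nine that does NOT belong to T has nonzero bracket. If the brackets of the first eight triples of T vanish, i.e., [A,B,C] = [D,E,F] = [A,E,G] = [B,D,G] = [A,F,H] = [C,D,H] = [B,F,I] = [C,E,I] = 0, then also [G,H,I] = 0. -/

import Mathlib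

/-- The bracket `[A,B,C]`: the determinant of the 3×3 matrix whose columns are `A`, `B`, `C`. -/
noncomputable def bracket3 (A B C : Fin 3 → ℝ) : ℝ :=
  ((Matrix.of ![A, B, C]).transpose).det

/-- The nine collinear triples of the Pappus configuration, for points indexed
`A = 0, B = 1, C = 2, D = 3, E = 4, F = 5, G = 6, H = 7, I = 8`:
`{A,B,C}, {D,E,F}, {A,E,G}, {B,D,G}, {A,F,H}, {C,D,H}, {B,F,I}, {C,E,I}, {G,H,I}`. -/
def pappusTriples : Finset (Finset (Fin 9)) :=
  { {0, 1, 2}, {3, 4, 5}, {0, 4, 6}, {1, 3, 6}, {0, 5, 7},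
    {2, 3, 7}, {1, 5, 8}, {2, 4, 8}, {6, 7, 8} }

lemma bracket3_eq (A B C : Fin 3 → ℝ) :
    bracket3 A B C =
      A 0 * (B 1 * C 2 - B 2 * C 1) - A 1 * (B 0 * C 2 - B 2 * C 0)
        + A 2 * (B 0 * C 1 - B 1 * C 0) := by
  rw [bracket3, Matrix.det_transpose]
  simp [Matrix.det_fin_three]
  ring

lemma dep_of_bracket_zero (A B C : Fin 3 → ℝ) (h : bracket3 A B C = 0) :
    ∃ v : Fin 3 → ℝ, v ≠ 0 ∧ ∀ i, v 0 * A i + v 1 * B i + v 2 * C i = 0 := by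
  obtain ⟨v, hv, hMv⟩ := (Matrix.exists_mulVec_eq_zero_iff).2 h
  refine ⟨v, hv, fun i => ?_⟩
  have := congrFun hMv i
  simpa [Matrix.mulVec, dotProduct, Fin.sum_univ_three, mul_comm] using this

lemma exists_rep (U V W T : Fin 3 → ℝ) (h1 : bracket3 U V W = 0)
    (hUV : bracket3 U V T ≠ 0) :
    ∃ a b : ℝ, ∀ i, W i = a * U i + b * V i := by
  obtain ⟨v, hv, e⟩ := dep_of_bracket_zero U V W h1
  by_cases h2 : v 2 = 0
  · exfalso
    apply hUV
    have e' : ∀ i, v 0 * U i + v 1 * V i = 0 := by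
      intro i
      have := e i
      rw [h2] at this
      linarith
    by_cases h0 : v 0 = 0
    · have h1' : v 1 ≠ 0 := by
        intro hzz
        apply hv
        funext i
        fin_cases i <;> simp [h0, hzz, h2]
      have hmul : v 1 * bracket3 U V T = 0 := by
        rw [bracket3_eq]
        linear_combination (-(U 1 * T 2) + U 2 * T 1) * e' 0
          + (U 0 * T 2 - U 2 * T 0) * e' 1 + (-(U 0 * T 1) + U 1 * T 0) * e' 2
      exact (mul_eq_zero.mp hmul).resolve_left h1'
    · have hmul : v 0 * bracket3 U V T = 0 := by
        rw [bracket3_eq]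
        linear_combination (V 1 * T 2 - V 2 * T 1) * e' 0
          + (-(V 0 * T 2) + V 2 * T 0) * e' 1 + (V 0 * T 1 - V 1 * T 0) * e' 2
      exact (mul_eq_zero.mp hmul).resolve_left h0
  · refine ⟨-(v 0) / v 2, -(v 1) / v 2, fun i => ?_⟩
    rw [div_mul_eq_mul_div, div_mul_eq_mul_div, ← add_div, eq_div_iff h2]
    linear_combination e i

lemma exists_scaled (U V W T X Y : Fin 3 → ℝ) (h1 : bracket3 U V W = 0)
    (hUV : bracket3 U V T ≠ 0) (h2 : bracket3 X Y W = 0)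
    (hXYV : bracket3 X Y V ≠ 0) :
    ∃ t : ℝ, ∀ i, W i = t * (bracket3 X Y V * U i - bracket3 X Y U * V i) := by
  obtain ⟨a, b, hW⟩ := exists_rep U V W T h1 hUV
  have hb : a * bracket3 X Y U + b * bracket3 X Y V = 0 := by
    simp only [bracket3_eq] at h2 ⊢
    linear_combination h2 - (X 1 * Y 2 - X 2 * Y 1) * hW 0
      - (-(X 0 * Y 2) + X 2 * Y 0) * hW 1 - (X 0 * Y 1 - X 1 * Y 0) * hW 2
  refine ⟨a / bracket3 X Y V, fun i => ?_⟩
  rw [div_mul_eq_mul_div, eq_div_iff hXYV]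
  linear_combination bracket3 X Y V * hW i + V i * hb

/-- **Pappus' theorem** (bracket form).  Here `p 0, …, p 8` are the homogeneous
coordinate vectors of the points `A, B, C, D, E, F, G, H, I`.  If every triple of
distinct points not in the configuration family has nonzero bracket, and the first
eight configuration triples are collinear, then `G`, `H`, `I` are collinear. -/
theorem pappus (p : Fin 9 → (Fin 3 → ℝ))
    (hnd : ∀ i j k : Fin 9, i ≠ j → i ≠ k → j ≠ k →
      ({i, j, k} : Finset (Fin 9)) ∉ pappusTriples →
      bracket3 (p i) (p j) (p k) ≠ 0)
    (hABC : bracket3 (p 0) (p 1) (p 2) = 0)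
    (hDEF : bracket3 (p 3) (p 4) (p 5) = 0)
    (hAEG : bracket3 (p 0) (p 4) (p 6) = 0)
    (hBDG : bracket3 (p 1) (p 3) (p 6) = 0)
    (hAFH : bracket3 (p 0) (p 5) (p 7) = 0)
    (hCDH : bracket3 (p 2) (p 3) (p 7) = 0)
    (hBFI : bracket3 (p 1) (p 5) (p 8) = 0)
    (hCEI : bracket3 (p 2) (p 4) (p 8) = 0) :
    bracket3 (p 6) (p 7) (p 8) = 0 := by
  have hBDA : bracket3 (p 1) (p 3) (p 0) ≠ 0 :=
    hnd 1 3 0 (by decide) (by decide) (by decide) (by decide)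
  have hCDA : bracket3 (p 2) (p 3) (p 0) ≠ 0 :=
    hnd 2 3 0 (by decide) (by decide) (by decide) (by decide)
  have hCEA : bracket3 (p 2) (p 4) (p 0) ≠ 0 :=
    hnd 2 4 0 (by decide) (by decide) (by decide) (by decide)
  have hAED : bracket3 (p 0) (p 4) (p 3) ≠ 0 :=
    hnd 0 4 3 (by decide) (by decide) (by decide) (by decide)
  have hAFD : bracket3 (p 0) (p 5) (p 3) ≠ 0 :=
    hnd 0 5 3 (by decide) (by decide) (by decide) (by decide)
  have hBFE : bracket3 (p 1) (p 5) (p 4) ≠ 0 :=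
    hnd 1 5 4 (by decide) (by decide) (by decide) (by decide)
  obtain ⟨t, hG⟩ := exists_scaled (p 1) (p 3) (p 6) (p 0) (p 0) (p 4) hBDG hBDA hAEG hAED
  obtain ⟨s, hH⟩ := exists_scaled (p 2) (p 3) (p 7) (p 0) (p 0) (p 5) hCDH hCDA hAFH hAFD
  obtain ⟨r, hI⟩ := exists_scaled (p 2) (p 4) (p 8) (p 0) (p 1) (p 5) hCEI hCEA hBFI hBFE
  set m1 := bracket3 (p 0) (p 4) (p 3) with hm1
  set m2 := bracket3 (p 0) (p 4) (p 1) with hm2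
  set m3 := bracket3 (p 0) (p 5) (p 3) with hm3
  set m4 := bracket3 (p 0) (p 5) (p 2) with hm4
  set m5 := bracket3 (p 1) (p 5) (p 4) with hm5
  set m6 := bracket3 (p 1) (p 5) (p 2) with hm6
  have hstep : bracket3 (p 6) (p 7) (p 8) =
      t * s * r * (m1 * m3 * (-m6) * bracket3 (p 1) (p 2) (p 4)
        + m1 * (-m4) * m5 * bracket3 (p 1) (p 3) (p 2)
        + m1 * (-m4) * (-m6) * bracket3 (p 1) (p 3) (p 4)
        + (-m2) * m3 * (-m6) * bracket3 (p 3) (p 2) (p 4)) := by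
    simp only [bracket3_eq]
    rw [hG 0, hG 1, hG 2, hH 0, hH 1, hH 2, hI 0, hI 1, hI 2]
    ring
  have hzero : m1 * m3 * (-m6) * bracket3 (p 1) (p 2) (p 4)
        + m1 * (-m4) * m5 * bracket3 (p 1) (p 3) (p 2)
        + m1 * (-m4) * (-m6) * bracket3 (p 1) (p 3) (p 4)
        + (-m2) * m3 * (-m6) * bracket3 (p 3) (p 2) (p 4) = 0 := by
    rw [hm1, hm2, hm3, hm4, hm5, hm6]
    simp only [bracket3_eq] at hABC hDEF ⊢
    linear_combination
      ((p 0 0 * (p 3 1 * p 4 2 - p 3 2 * p 4 1) - p 0 1 * (p 3 0 * p 4 2 - p 3 2 * p 4 0) + p 0 2 * (p 3 0 * p 4 1 - p 3 1 * p 4 0)) * (p 1 0 * (p 3 1 * p 5 2 - p 3 2 * p 5 1) - p 1 1 * (p 3 0 * p 5 2 - p 3 2 * p 5 0) + p 1 2 * (p 3 0 * p 5 1 - p 3 1 * p 5 0)) * (p 2 0 * (p 4 1 * p 5 2 - p 4 2 * p 5 1) - p 2 1 * (p 4 0 * p 5 2 - p 4 2 * p 5 0) + p 2 2 * (p 4 0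 * p 5 1 - p 4 1 * p 5 0))) * hABC
      - ((p 0 0 * (p 1 1 * p 3 2 - p 1 2 * p 3 1) - p 0 1 * (p 1 0 * p 3 2 - p 1 2 * p 3 0) + p 0 2 * (p 1 0 * p 3 1 - p 1 1 * p 3 0)) * (p 0 0 * (p 2 1 * p 4 2 - p 2 2 * p 4 1) - p 0 1 * (p 2 0 * p 4 2 - p 2 2 * p 4 0) + p 0 2 * (p 2 0 * p 4 1 - p 2 1 * p 4 0)) * (p 1 0 * (p 2 1 * p 5 2 - p 2 2 * p 5 1) - p 1 1 * (p 2 0 * p 5 2 - p 2 2 * p 5 0) + p 1 2 * (p 2 0 * p 5 1 - p 2 1 * p 5 0))) * hDEF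
  rw [hstep, hzero, mul_zero]
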